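/- Let L be an n×n PCB matrix and K a field. Then the set {f_C : ∅ ≠ C ⊆ {1,…,n−1}} is a minimal Gröbner basis of I(𝓛) with respect to the weighted reverse lexicographic order with weights ν(L) — each f_C is monic and its leading monomial x^{(Lχ_C)⁺} is not divisible by x^{(Lχ_D)⁺} for any nonempty D ⊆ {1,…,n−1} with D ≠ C — and {f_C} is a minimal homogeneous system of generators of I(𝓛): no proper subset of {f_C : ∅ ≠ C ⊆ {1,…,n−1}} generates I(𝓛). -/

import Mathlib

/-!
Let `l` be the last index and `m_C = L χ_C`. Because the rows of `L` sum to zero and its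
off-diagonal entries are negative, for `∅ ≠ C ∌ l` the vector `m_C` is positive exactly on `C`.
Since `νᵀ L = 0`, both terms of `f_C` have the same degree, and `x^{m_C⁻}` contains `x_l` while
`x^{m_C⁺}` does not, so the reverse lexicographic tie-break makes `x^{m_C⁺}` the leading monomial.

A binomial `x^α - x^β` with `α - β = L z` is reduced by `f_C`, where `C` is the set on which `z`
attains its maximum: comparing rows at a maximum gives `m_C⁺ ≤ α`. The reduction keeps the degree
and raises the exponent of `x_l`, so it terminates, and the `f_C` generate the lattice ideal.
Finally no monomial of `f_D` divides the leading monomial of `f_C` for `D ≠ C`, so by the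
description of monomial ideals `f_C` is not in the ideal generated by the other `f_D`.
-/

open MvPolynomial Finset

/-- A critical binomial (CB) matrix. -/
def IsCB (n : ℕ) (L : Matrix (Fin n) (Fin n) ℤ) : Prop :=
  (∀ i, 0 < L i i) ∧ (∀ i j : Fin n, i ≠ j → L i j ≤ 0) ∧ (∀ i, ∑ j, L i j = 0) ∧
    (∀ j, ∃ i, i ≠ j ∧ L i j ≠ 0)

/-- Irreducibility of a square matrix. -/
def IsIrreducibleMat {n : ℕ} (M : Matrix (Fin n) (Fin n) ℤ) : Prop :=
  ¬ ∃ I J : Set (Fin n), I.Nonempty ∧ J.Nonempty ∧ Disjoint I J ∧ I ∪ J = Set.univ ∧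
      ∀ i ∈ I, ∀ j ∈ J, M i j = 0

def IsICB (n : ℕ) (L : Matrix (Fin n) (Fin n) ℤ) : Prop := IsCB n L ∧ IsIrreducibleMat L

def IsPCB (n : ℕ) (L : Matrix (Fin n) (Fin n) ℤ) : Prop :=
  IsCB n L ∧ ∀ i j : Fin n, i ≠ j → L i j < 0

noncomputable def posExp {n : ℕ} (m : Fin n → ℤ) : Fin n →₀ ℕ :=
  Finsupp.equivFunOnFinite.symm fun i => (m i).toNat

noncomputable def negExp {n : ℕ} (m : Fin n → ℤ) : Fin n →₀ ℕ :=
  Finsupp.equivFunOnFinite.symm fun i => (-(m i)).toNat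

noncomputable def binom (K : Type*) [Field K] {n : ℕ} (m : Fin n → ℤ) :
    MvPolynomial (Fin n) K :=
  monomial (posExp m) 1 - monomial (negExp m) 1

def colLattice {n : ℕ} (L : Matrix (Fin n) (Fin n) ℤ) : AddSubgroup (Fin n → ℤ) :=
  AddSubgroup.closure {v | ∃ j : Fin n, v = fun i => L i j}

noncomputable def latticeIdeal (K : Type*) [Field K] {n : ℕ} (L : Matrix (Fin n) (Fin n) ℤ) :
    Ideal (MvPolynomial (Fin n) K) :=
  Ideal.span {f | ∃ m ∈ colLattice L, f = binom K m}

noncomputable def matrixIdeal (K : Type*) [Field K] {n : ℕ} (L : Matrix (Fin n) (Fin n) ℤ) :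
    Ideal (MvPolynomial (Fin n) K) :=
  Ideal.span {f | ∃ j : Fin n, f = binom K fun i => L i j}

def chi {n : ℕ} (C : Finset (Fin n)) : Fin n → ℤ := fun i => if i ∈ C then 1 else 0

/-- The weighted reverse lexicographic order with weights `ν` on (exponents of)
monomials: `x^α > x^β` iff `deg x^α > deg x^β`, or the degrees agree and the
rightmost nonzero entry of `α - β` is negative. -/
def wrloGT {n : ℕ} (ν : Fin n → ℕ) (α β : Fin n →₀ ℕ) : Prop :=
  (∑ i, ν i * β i < ∑ i, ν i * α i) ∨
    ((∑ i, ν i * α i = ∑ i, ν i * β i) ∧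
      ∃ j : Fin n, α j < β j ∧ ∀ k : Fin n, j < k → α k = β k)

open Matrix

lemma MvPolynomial.exists_le_of_mem_support_of_mem_span {σ R : Type*} [CommSemiring R]
    {S : Set (MvPolynomial σ R)} {f : MvPolynomial σ R} (hf : f ∈ Ideal.span S)
    {a : σ →₀ ℕ} (ha : a ∈ f.support) : ∃ g ∈ S, ∃ b ∈ g.support, b ≤ a := by
  have hle : Ideal.span S ≤
      Ideal.span ((fun b => monomial b (1 : R)) '' ⋃ g ∈ S, (g.support : Set (σ →₀ ℕ))) := by
    refine Ideal.span_le.2 fun g hg => mem_ideal_span_monomial_image.2 fun b hb => ?_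
    exact ⟨b, Set.mem_biUnion hg hb, le_rfl⟩
  obtain ⟨b, hb, hba⟩ := mem_ideal_span_monomial_image.1 (hle hf) a ha
  obtain ⟨g, hg, hb⟩ := Set.mem_iUnion₂.1 hb
  exact ⟨g, hg, b, hb, hba⟩

lemma MvPolynomial.monomial_sub_monomial_eq {σ R : Type*} [CommRing R] {α β p : σ →₀ ℕ}
    (q : σ →₀ ℕ) (hp : p ≤ α) :
    monomial α (1 : R) - monomial β 1 =
      monomial (α - p) 1 * (monomial p 1 - monomial q 1) +
        (monomial (α - p + q) 1 - monomial β 1) := by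
  rw [mul_sub, monomial_mul, monomial_mul, one_mul, tsub_add_cancel_of_le hp]
  ring

lemma Matrix.mulVec_apply_eq_sum_mul_sub {ι R : Type*} [Fintype ι] [CommRing R]
    {L : Matrix ι ι R} (hrow : ∀ i, ∑ j, L i j = 0) (v : ι → R) (i : ι) :
    (L *ᵥ v) i = ∑ j, L i j * (v j - v i) := by
  simp only [mul_sub, sum_sub_distrib, ← sum_mul, hrow i, zero_mul, sub_zero]
  rfl

lemma Matrix.vecMul_eq_zero_of_adjugate_apply_eq_smul {ι R : Type*} [Fintype ι] [DecidableEq ι]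
    [CommRing R] [IsDomain R] {L : Matrix ι ι R} (hrow : ∀ i, ∑ j, L i j = 0) {ν : ι → R}
    {d : R} (hd : d ≠ 0) {i : ι} (hadj : L.adjugate i = d • ν) : ν ᵥ* L = 0 := by
  have hdet : L.det = 0 :=
    exists_mulVec_eq_zero_iff.1
      ⟨1, fun h => one_ne_zero (congr_fun h i),
        funext fun k => by simp [mulVec, dotProduct_one, hrow k]⟩
  have h := congr_fun (adjugate_mul L) i
  rw [hdet, zero_smul, mul_apply_eq_vecMul, hadj, smul_vecMul] at h
  exact (smul_eq_zero.1 h).resolve_left hd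

section Binomials

variable {n : ℕ}

@[simp] lemma posExp_apply (m : Fin n → ℤ) (i : Fin n) : posExp m i = (m i).toNat := rfl

@[simp] lemma negExp_apply (m : Fin n → ℤ) (i : Fin n) : negExp m i = (-m i).toNat := rfl

lemma posExp_sub_negExp (m : Fin n → ℤ) (i : Fin n) :
    (posExp m i : ℤ) - negExp m i = m i := by
  simp only [posExp_apply, negExp_apply]
  omega

lemma posExp_ne_negExp {m : Fin n → ℤ} (hm : m ≠ 0) : posExp m ≠ negExp m := by
  refine fun h => hm (funext fun i => ?_)
  simpa [h] using (posExp_sub_negExp m i).symm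

lemma coe_tsub_posExp_add_negExp {α : Fin n →₀ ℕ} {m : Fin n → ℤ} (h : posExp m ≤ α)
    (i : Fin n) : ((α - posExp m + negExp m) i : ℤ) = α i - m i := by
  have hi := Finsupp.le_def.1 h i
  simp only [Finsupp.add_apply, Finsupp.tsub_apply, posExp_apply, negExp_apply] at hi ⊢
  omega

lemma support_binom_subset (K : Type*) [Field K] (m : Fin n → ℤ) :
    (binom K m).support ⊆ {posExp m, negExp m} := by
  classical
  refine (support_sub _ _ _).trans (union_subset ?_ ?_) <;>
    refine support_monomial_subset.trans ?_ <;> simp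

lemma coeff_posExp_binom (K : Type*) [Field K] {m : Fin n → ℤ} (hm : m ≠ 0) :
    coeff (posExp m) (binom K m) = 1 := by
  rw [binom, coeff_sub, coeff_monomial, coeff_monomial, if_pos rfl,
    if_neg (posExp_ne_negExp hm).symm, sub_zero]

lemma wrloGT_of_mem_support_binom (K : Type*) [Field K] {ν : Fin n → ℕ} {m : Fin n → ℤ}
    {l : Fin n} (hl : IsTop l) (hνm : (fun i => (ν i : ℤ)) ⬝ᵥ m = 0) (hml : m l < 0)
    {α : Fin n →₀ ℕ} (hα : α ∈ (binom K m).support) (hαp : α ≠ posExp m) :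
    wrloGT ν (posExp m) α := by
  obtain rfl : α = negExp m := by
    simpa [hαp] using support_binom_subset K m hα
  refine Or.inr ⟨?_, l, ?_, fun k hk => absurd (hl k) hk.not_ge⟩
  · have h : ∑ i, (ν i : ℤ) * posExp m i = ∑ i, (ν i : ℤ) * negExp m i := by
      rw [← sub_eq_zero, ← sum_sub_distrib]
      simp_rw [← mul_sub, posExp_sub_negExp]
      exact hνm
    exact_mod_cast h
  · simp only [posExp_apply, negExp_apply]
    omega

lemma mulVec_chi_apply (L : Matrix (Fin n) (Fin n) ℤ) (C : Finset (Fin n)) (i : Fin n) :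
    (L *ᵥ chi C) i = ∑ j ∈ C, L i j := by
  simp [mulVec, dotProduct, chi]

lemma mem_colLattice_iff {L : Matrix (Fin n) (Fin n) ℤ} {m : Fin n → ℤ} :
    m ∈ colLattice L ↔ ∃ z, m = L *ᵥ z := by
  constructor
  · intro h
    induction h using AddSubgroup.closure_induction with
    | mem v hv =>
      obtain ⟨j, rfl⟩ := hv
      exact ⟨Pi.single j 1, by rw [mulVec_single_one]; rfl⟩
    | zero => exact ⟨0, (mulVec_zero L).symm⟩
    | add _ _ _ _ hx hy =>
      obtain ⟨x, rfl⟩ := hx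
      obtain ⟨y, rfl⟩ := hy
      exact ⟨x + y, (mulVec_add L x y).symm⟩
    | neg _ _ hx =>
      obtain ⟨x, rfl⟩ := hx
      exact ⟨-x, (mulVec_neg x L).symm⟩
  · rintro ⟨z, rfl⟩
    have hcols : L *ᵥ z = ∑ j, z j • fun i => L i j := by
      ext i
      simp [mulVec, dotProduct, mul_comm]
    rw [hcols]
    have hcol (j : Fin n) : (fun i => L i j) ∈ colLattice L := AddSubgroup.subset_closure ⟨j, rfl⟩
    exact AddSubgroup.sum_mem _ fun j _ => AddSubgroup.zsmul_mem _ (hcol j) _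

def subsetBinomials (K : Type*) [Field K] (L : Matrix (Fin n) (Fin n) ℤ) (l : Fin n) :
    Set (MvPolynomial (Fin n) K) :=
  {f | ∃ C : Finset (Fin n), C.Nonempty ∧ l ∉ C ∧ f = binom K (L.mulVec (chi C))}

end Binomials

namespace IsPCB

variable {n : ℕ} {L : Matrix (Fin n) (Fin n) ℤ}

lemma row_sum_eq_zero (hL : IsPCB n L) (i : Fin n) : ∑ j, L i j = 0 := hL.1.2.2.1 i

lemma mulVec_chi_apply_nonpos (hL : IsPCB n L) {C : Finset (Fin n)} {i : Fin n} (hi : i ∉ C) :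
    (L *ᵥ chi C) i ≤ 0 := by
  rw [mulVec_chi_apply]
  exact sum_nonpos fun j hj => (hL.2 i j (by rintro rfl; exact hi hj)).le

lemma mulVec_chi_apply_neg (hL : IsPCB n L) {C : Finset (Fin n)} (hC : C.Nonempty) {i : Fin n}
    (hi : i ∉ C) : (L *ᵥ chi C) i < 0 := by
  rw [mulVec_chi_apply]
  exact sum_neg (fun j hj => hL.2 i j (by rintro rfl; exact hi hj)) hC

lemma mulVec_chi_apply_pos (hL : IsPCB n L) {C : Finset (Fin n)} {i j : Fin n} (hi : i ∈ C)
    (hj : j ∉ C) : 0 < (L *ᵥ chi C) i := by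
  have hsplit := sum_add_sum_compl C (L i)
  have hcompl : ∑ k ∈ Cᶜ, L i k < 0 :=
    sum_neg (fun k hk => hL.2 i k (by rintro rfl; exact mem_compl.1 hk hi)) ⟨j, mem_compl.2 hj⟩
  rw [hL.row_sum_eq_zero] at hsplit
  rw [mulVec_chi_apply]
  linarith

lemma mulVec_chi_le_mulVec (hL : IsPCB n L) {z : Fin n → ℤ} {M : ℤ} (hM : ∀ j, z j ≤ M)
    {i : Fin n} (hi : z i = M) : (L *ᵥ chi (univ.filter fun j => z j = M)) i ≤ (L *ᵥ z) i := by
  rw [mulVec_apply_eq_sum_mul_sub hL.row_sum_eq_zero,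
    mulVec_apply_eq_sum_mul_sub hL.row_sum_eq_zero]
  refine sum_le_sum fun j _ => ?_
  by_cases hj : z j = M
  · simp [chi, hj, hi]
  · have hLij := hL.2 i j (by rintro rfl; exact hj hi)
    have hzj : z j - z i ≤ -1 := by have := hM j; omega
    simp only [chi, mem_filter, mem_univ, true_and, if_neg hj, if_pos hi]
    nlinarith

lemma exists_posExp_le (hL : IsPCB n L) {α β : Fin n →₀ ℕ} {z : Fin n → ℤ}
    (hz : ∀ i, (α i : ℤ) - β i = (L *ᵥ z) i) {l i₀ : Fin n} (hl : z l < z i₀) :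
    ∃ C : Finset (Fin n), C.Nonempty ∧ l ∉ C ∧ posExp (L *ᵥ chi C) ≤ α := by
  obtain ⟨i, -, hi⟩ := exists_max_image univ z ⟨l, mem_univ l⟩
  have hM : ∀ j, z j ≤ z i := fun j => hi j (mem_univ j)
  refine ⟨univ.filter fun j => z j = z i, ⟨i, by simp⟩, ?_, Finsupp.le_def.2 fun j => ?_⟩
  · simpa using (hl.trans_le (hM i₀)).ne
  · by_cases hj : z j = z i
    · have := hL.mulVec_chi_le_mulVec hM hj
      have := hz j
      simp only [posExp_apply]
      omega
    · have := hL.mulVec_chi_apply_nonpos (C := univ.filter fun j => z j = z i) (i := j)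
        (by simpa using hj)
      simp only [posExp_apply]
      omega

lemma not_posExp_le_posExp (hL : IsPCB n L) {C D : Finset (Fin n)} (hD : D.Nonempty) {l : Fin n}
    (hlD : l ∉ D) (hDC : D ≠ C) : ¬ posExp (L *ᵥ chi D) ≤ posExp (L *ᵥ chi C) := by
  suffices h : ∃ i ∈ D, (L *ᵥ chi C) i < (L *ᵥ chi D) i by
    obtain ⟨i, hiD, hi⟩ := h
    have hpos := hL.mulVec_chi_apply_pos hiD hlD
    intro hle
    have := Finsupp.le_def.1 hle i
    simp only [posExp_apply] at this
    omega
  by_cases hsub : D ⊆ C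
  · obtain ⟨i, hi⟩ := hD
    obtain ⟨j, hjC, hjD⟩ := exists_of_ssubset (hsub.ssubset_of_ne hDC)
    have hsplit := sum_sdiff (f := L i) hsub
    have hneg : ∑ k ∈ C \ D, L i k < 0 :=
      sum_neg (fun k hk => hL.2 i k (by rintro rfl; exact (mem_sdiff.1 hk).2 hi))
        ⟨j, mem_sdiff.2 ⟨hjC, hjD⟩⟩
    refine ⟨i, hi, ?_⟩
    rw [mulVec_chi_apply, mulVec_chi_apply]
    linarith
  · obtain ⟨i, hiD, hiC⟩ := not_subset.1 hsub
    exact ⟨i, hiD, (hL.mulVec_chi_apply_nonpos hiC).trans_lt (hL.mulVec_chi_apply_pos hiD hlD)⟩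

lemma not_negExp_le_posExp (hL : IsPCB n L) {C D : Finset (Fin n)} {l : Fin n} (hlC : l ∉ C)
    (hD : D.Nonempty) (hlD : l ∉ D) : ¬ negExp (L *ᵥ chi D) ≤ posExp (L *ᵥ chi C) := by
  intro hle
  have := Finsupp.le_def.1 hle l
  have := hL.mulVec_chi_apply_nonpos hlC
  have := hL.mulVec_chi_apply_neg hD hlD
  simp only [posExp_apply, negExp_apply] at *
  omega

lemma exists_reduction (hL : IsPCB n L) {ν : Fin n → ℕ} (hνL : (fun i => (ν i : ℤ)) ᵥ* L = 0)
    (K : Type*) [Field K] {α β : Fin n →₀ ℕ} {z : Fin n → ℤ}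
    (hz : ∀ i, (α i : ℤ) - β i = (L *ᵥ z) i) {l i₀ : Fin n} (hl : z l < z i₀) :
    ∃ (α' : Fin n →₀ ℕ) (z' : Fin n → ℤ), (∀ i, (α' i : ℤ) - β i = (L *ᵥ z') i) ∧
      ∑ i, (ν i : ℤ) * α' i = ∑ i, (ν i : ℤ) * α i ∧ α l < α' l ∧
      monomial α (1 : K) - monomial β 1 - (monomial α' 1 - monomial β 1) ∈
        Ideal.span (subsetBinomials K L l) := by
  obtain ⟨C, hC, hlC, hle⟩ := hL.exists_posExp_le hz hl
  have hα' := coe_tsub_posExp_add_negExp hle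
  refine ⟨α - posExp (L *ᵥ chi C) + negExp (L *ᵥ chi C), z - chi C, fun i => ?_, ?_, ?_, ?_⟩
  · rw [hα', mulVec_sub, Pi.sub_apply]
    linarith [hz i]
  · have hνm : (fun i => (ν i : ℤ)) ⬝ᵥ (L *ᵥ chi C) = 0 := by
      rw [dotProduct_mulVec, hνL, zero_dotProduct]
    simp_rw [hα', mul_sub, sum_sub_distrib]
    rw [show ∑ i, (ν i : ℤ) * (L *ᵥ chi C) i = 0 from hνm, sub_zero]
  · have := hα' l
    have := hL.mulVec_chi_apply_neg hC hlC
    omega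
  · rw [monomial_sub_monomial_eq (negExp (L *ᵥ chi C)) hle, add_sub_cancel_right]
    exact Ideal.mul_mem_left _ _ (Ideal.subset_span ⟨C, hC, hlC, rfl⟩)

lemma monomial_sub_monomial_mem_span (hL : IsPCB n L) {ν : Fin n → ℕ} {l : Fin n}
    (hνl : 0 < ν l) (hνL : (fun i => (ν i : ℤ)) ᵥ* L = 0) (K : Type*) [Field K]
    {α β : Fin n →₀ ℕ} {z : Fin n → ℤ} (hz : ∀ i, (α i : ℤ) - β i = (L *ᵥ z) i) :
    monomial α (1 : K) - monomial β 1 ∈ Ideal.span (subsetBinomials K L l) := by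
  set E : (Fin n →₀ ℕ) → ℤ := fun γ => ∑ i, (ν i : ℤ) * γ i - γ l with hE
  have hE0 (γ : Fin n →₀ ℕ) : 0 ≤ E γ := by
    have h1 := single_le_sum (f := fun i => (ν i : ℤ) * γ i) (fun i _ => by positivity)
      (mem_univ l)
    have h2 : (γ l : ℤ) ≤ ν l * γ l :=
      le_mul_of_one_le_left (by positivity) (by exact_mod_cast hνl)
    simp only [hE]
    linarith
  suffices H : ∀ N : ℕ, ∀ (α β : Fin n →₀ ℕ) (z : Fin n → ℤ),
      (∀ i, (α i : ℤ) - β i = (L *ᵥ z) i) → E α + E β < N →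
        monomial α (1 : K) - monomial β 1 ∈ Ideal.span (subsetBinomials K L l) from
    H ((E α + E β).toNat + 1) α β z hz (by push_cast; linarith [Int.self_le_toNat (E α + E β)])
  intro N
  induction N with
  | zero =>
    intro α β _ _ h
    linarith [hE0 α, hE0 β, Nat.cast_zero (R := ℤ) ▸ h]
  | succ N ih =>
    have reduce (α β : Fin n →₀ ℕ) (z : Fin n → ℤ) (hz : ∀ i, (α i : ℤ) - β i = (L *ᵥ z) i)
        {i₀ : Fin n} (hi₀ : z l < z i₀) (hN : E α + E β < ↑(N + 1)) :
        monomial α (1 : K) - monomial β 1 ∈ Ideal.span (subsetBinomials K L l) := by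
      obtain ⟨α', z', hz', hdeg, hl', hmem⟩ := hL.exists_reduction hνL K hz hi₀
      have hE' : E α' + E β < N := by
        simp only [hE, hdeg] at hN ⊢
        push_cast at hN
        omega
      simpa using add_mem hmem (ih α' β z' hz' hE')
    intro α β z hz hN
    by_cases hconst : ∀ i, z i = z l
    · obtain rfl : α = β := Finsupp.ext fun i => by
        have := hz i
        simp [mulVec_apply_eq_sum_mul_sub hL.row_sum_eq_zero, hconst] at this
        omega
      simp
    · obtain ⟨i, hi⟩ := not_forall.1 hconst
      rcases Ne.lt_or_gt hi with h | h
      · have hz' (j : Fin n) : (β j : ℤ) - α j = (L *ᵥ -z) j := by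
          rw [mulVec_neg, Pi.neg_apply]
          linarith [hz j]
        rw [← neg_sub]
        exact neg_mem (reduce β α (-z) hz' (i₀ := i) (by simpa using h) (by linarith))
      · exact reduce α β z hz h hN

lemma span_subsetBinomials_eq_latticeIdeal (hL : IsPCB n L) {ν : Fin n → ℕ} {l : Fin n}
    (hνl : 0 < ν l) (hνL : (fun i => (ν i : ℤ)) ᵥ* L = 0) (K : Type*) [Field K] :
    Ideal.span (subsetBinomials K L l) = latticeIdeal K L := by
  refine le_antisymm (Ideal.span_mono ?_) (Ideal.span_le.2 ?_)
  · rintro _ ⟨C, -, -, rfl⟩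
    exact ⟨_, mem_colLattice_iff.2 ⟨chi C, rfl⟩, rfl⟩
  · rintro _ ⟨m, hm, rfl⟩
    obtain ⟨z, rfl⟩ := mem_colLattice_iff.1 hm
    exact hL.monomial_sub_monomial_mem_span hνl hνL K (posExp_sub_negExp _)

lemma span_ne_latticeIdeal_of_ssubset (hL : IsPCB n L) {l : Fin n} {K : Type*} [Field K]
    (hspan : Ideal.span (subsetBinomials K L l) = latticeIdeal K L)
    {S : Set (MvPolynomial (Fin n) K)} (hS : S ⊂ subsetBinomials K L l) :
    Ideal.span S ≠ latticeIdeal K L := by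
  intro hS_span
  obtain ⟨_, ⟨C, hC, hlC, rfl⟩, hCS⟩ := Set.exists_of_ssubset hS
  have hmem : binom K (L *ᵥ chi C) ∈ Ideal.span S :=
    hS_span ▸ hspan ▸ Ideal.subset_span ⟨C, hC, hlC, rfl⟩
  have hlead : posExp (L *ᵥ chi C) ∈ (binom K (L *ᵥ chi C)).support := by
    rw [mem_support_iff, coeff_posExp_binom K
      (ne_of_apply_ne (· l) (hL.mulVec_chi_apply_neg hC hlC).ne)]
    exact one_ne_zero
  obtain ⟨_, hg, b, hb, hble⟩ := exists_le_of_mem_support_of_mem_span hmem hlead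
  obtain ⟨D, hD, hlD, rfl⟩ := hS.subset hg
  have hDC : D ≠ C := by
    rintro rfl
    exact hCS hg
  rcases mem_insert.1 (support_binom_subset K _ hb) with rfl | hb
  · exact hL.not_posExp_le_posExp hD hlD hDC hble
  · exact hL.not_negExp_le_posExp hlC hD hlD (mem_singleton.1 hb ▸ hble)

end IsPCB

/-- Let `L` be a PCB matrix, `K` a field and `ν = ν(L)`.  Then
`{f_C : ∅ ≠ C ⊆ {1,…,n-1}}` is a minimal Gröbner basis of `I(𝓛)` w.r.t. the weighted
reverse lexicographic order with weights `ν` — each `f_C` is monic with leading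
monomial `x^{(LχC)⁺}`, and this leading monomial is not divisible by `x^{(LχD)⁺}` for
any nonempty `D ⊆ {1,…,n-1}` with `D ≠ C` — and a minimal homogeneous system of
generators of `I(𝓛)`: the `f_C` generate `I(𝓛)` and no proper subset of
`{f_C : ∅ ≠ C ⊆ {1,…,n-1}}` generates `I(𝓛)`. -/
theorem minimal_groebner_basis_of_pcb (n : ℕ) (hn : 3 ≤ n)
    (L : Matrix (Fin n) (Fin n) ℤ) (hL : IsPCB n L)
    (K : Type*) [Field K]
    (ν : Fin n → ℕ) (hν : ∀ i, 0 < ν i)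
    (d : ℕ) (hd : 0 < d) (hadj : ∀ i j : Fin n, L.adjugate i j = (d : ℤ) * (ν j : ℤ)) :
    (Ideal.span {f | ∃ C : Finset (Fin n),
        C.Nonempty ∧ (⟨n - 1, by omega⟩ : Fin n) ∉ C ∧
          f = binom K (L.mulVec (chi C))} = latticeIdeal K L) ∧
    (∀ C : Finset (Fin n), C.Nonempty → (⟨n - 1, by omega⟩ : Fin n) ∉ C →
      coeff (posExp (L.mulVec (chi C))) (binom K (L.mulVec (chi C))) = 1 ∧
      ∀ α ∈ (binom K (L.mulVec (chi C))).support,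
        α ≠ posExp (L.mulVec (chi C)) → wrloGT ν (posExp (L.mulVec (chi C))) α) ∧
    (∀ C D : Finset (Fin n), C.Nonempty → D.Nonempty →
      (⟨n - 1, by omega⟩ : Fin n) ∉ C → (⟨n - 1, by omega⟩ : Fin n) ∉ D → D ≠ C →
      ¬ (posExp (L.mulVec (chi D)) : Fin n →₀ ℕ) ≤ posExp (L.mulVec (chi C))) ∧
    (∀ S : Set (MvPolynomial (Fin n) K),
      S ⊆ {f | ∃ C : Finset (Fin n),
        C.Nonempty ∧ (⟨n - 1, by omega⟩ : Fin n) ∉ C ∧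
          f = binom K (L.mulVec (chi C))} →
      S ≠ {f | ∃ C : Finset (Fin n),
        C.Nonempty ∧ (⟨n - 1, by omega⟩ : Fin n) ∉ C ∧
          f = binom K (L.mulVec (chi C))} →
      Ideal.span S ≠ latticeIdeal K L) := by
  set l : Fin n := ⟨n - 1, by omega⟩
  have hl : IsTop l := fun k => Fin.le_def.2 (by simp only [l]; omega)
  have hνL : (fun i => (ν i : ℤ)) ᵥ* L = 0 :=
    vecMul_eq_zero_of_adjugate_apply_eq_smul hL.row_sum_eq_zero (Nat.cast_ne_zero.2 hd.ne')
      (i := l) (funext fun j => by simp [hadj])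
  have hspan := hL.span_subsetBinomials_eq_latticeIdeal (hν l) hνL K
  refine ⟨hspan, fun C hC hlC => ?_, fun C D _ hD _ hlD hDC => hL.not_posExp_le_posExp hD hlD hDC,
    fun S hS hne => hL.span_ne_latticeIdeal_of_ssubset hspan (hS.ssubset_of_ne hne)⟩
  have hml := hL.mulVec_chi_apply_neg hC hlC
  exact ⟨coeff_posExp_binom K (ne_of_apply_ne (· l) hml.ne),
    fun α hα hαp => wrloGT_of_mem_support_binom K hl
      (by rw [dotProduct_mulVec, hνL, zero_dotProduct]) hml hα hαp⟩
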